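/- arXiv:2111.13054 — 4 statements merged into one kernel-verified Lean document; each statement's English description precedes it below -/
import Mathlib

section
/- If G is a finite connected cograph, then its strong resolving graph G_SR is a cograph, i.e., G_SR contains no induced path on four vertices. -/
/-- Vertex `u` is maximally distant to `v`: no neighbour of `u` is farther from `v`. -/
def MaxDistTo {V : Type*} (G : SimpleGraph V) (u v : V) : Prop :=
  ∀ u', G.Adj u u' → G.dist u' v ≤ G.dist u v

/-- Vertices `u` and `v` are mutually maximally distant in `G`. -/
def MutuallyMaxDist {V : Type*} (G : SimpleGraph V) (u v : V) : Prop :=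
  MaxDistTo G u v ∧ MaxDistTo G v u

/-- The strong resolving graph of `G`. -/
def strongResolvingGraph {V : Type*} (G : SimpleGraph V) : SimpleGraph V where
  Adj u v := u ≠ v ∧ MutuallyMaxDist G u v
  symm := by
    constructor
    rintro u v ⟨h1, h2, h3⟩
    exact ⟨h1.symm, h3, h2⟩
  loopless := by
    constructor
    rintro u ⟨h, -⟩
    exact h rfl

/-- `w` strongly resolves the pair `u, v`. -/
def StronglyResolves {V : Type*} (G : SimpleGraph V) (w u v : V) : Prop :=
  G.dist w u = G.dist w v + G.dist v u ∨ G.dist w v = G.dist w u + G.dist u v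

/-- `R` is a strong resolving set for `G`. -/
def IsStrongResolvingSet {V : Type*} (G : SimpleGraph V) (R : Set V) : Prop :=
  ∀ u v : V, u ≠ v → ∃ w ∈ R, StronglyResolves G w u v

/-- The strong metric dimension of `G`. -/
noncomputable def smd {V : Type*} [Fintype V] (G : SimpleGraph V) : ℕ :=
  sInf {n | ∃ R : Finset V, IsStrongResolvingSet G ↑R ∧ R.card = n}

/-- `C` is a vertex cover of `H`. -/
def IsVertexCover {V : Type*} (H : SimpleGraph V) (C : Set V) : Prop :=
  ∀ a b : V, H.Adj a b → a ∈ C ∨ b ∈ C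

/-- The minimum size of a vertex cover of `H`. -/
noncomputable def tau {V : Type*} [Fintype V] (H : SimpleGraph V) : ℕ :=
  sInf {n | ∃ C : Finset V, IsVertexCover H ↑C ∧ C.card = n}

/-- Distinct vertices are twins if they have the same neighbours apart from each other. -/
def Twins {V : Type*} (G : SimpleGraph V) (u v : V) : Prop :=
  G.neighborSet u \ {v} = G.neighborSet v \ {u}

/-- True twins: adjacent twins (equivalently, equal closed neighbourhoods). -/
def TrueTwins {V : Type*} (G : SimpleGraph V) (u v : V) : Prop :=
  Twins G u v ∧ G.Adj u v

/-- False twins: non-adjacent twins (equivalently, equal open neighbourhoods). -/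
def FalseTwins {V : Type*} (G : SimpleGraph V) (u v : V) : Prop :=
  Twins G u v ∧ ¬ G.Adj u v

/-- `G` contains an induced path on four vertices. -/
def HasInducedP4 {V : Type*} (G : SimpleGraph V) : Prop :=
  ∃ a b c d : V, a ≠ c ∧ a ≠ d ∧ b ≠ d ∧
    G.Adj a b ∧ G.Adj b c ∧ G.Adj c d ∧ ¬ G.Adj a c ∧ ¬ G.Adj a d ∧ ¬ G.Adj b d

/-!
A connected cograph has diameter at most two, since the first four vertices of a shortest path
of length three would induce a `P₄`. Hence any two distinct non-adjacent vertices are at the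
diameter and so are mutually maximally distant, whereas two adjacent vertices are mutually
maximally distant exactly when they are true twins. Thus `G_SR` is the complement of `G` with the
true-twin pairs added back. The three non-edges of an induced `P₄` in `G_SR` are then edges of `G`;
an edge of `G` on the path itself would be a true-twin pair, and twin-propagation contradicts one
of the non-edges, while if there is none the four vertices induce a `P₄` in `G`.
-/

namespace SimpleGraph

variable {V : Type*} {G : SimpleGraph V}

lemma exists_adj_dist_eq_of_dist_eq_succ {t u : V} {n : ℕ} (h : G.dist t u = n + 1) :
    ∃ w, G.Adj u w ∧ G.dist t w = n := by
  rw [dist_comm] at h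
  obtain ⟨p, hp⟩ := exists_walk_of_dist_ne_zero (G := G) (u := u) (v := t) (by omega)
  cases p with
  | nil => simp at h
  | @cons _ w _ hadj q =>
    refine ⟨w, hadj, ?_⟩
    have hq : q.length = n := by simp only [Walk.length_cons] at hp; omega
    have hle : G.dist w t ≤ n := hq ▸ dist_le q
    have hge : G.dist u t ≤ G.dist w t + 1 := by
      obtain ⟨r, hr⟩ := q.reachable.exists_walk_length_eq_dist
      have := dist_le (Walk.cons hadj r)
      rwa [Walk.length_cons, hr] at this
    rw [dist_comm]
    omega

lemma not_adj_of_dist_add_two_le {t x y : V} (h : G.dist t y + 2 ≤ G.dist t x) : ¬G.Adj x y :=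
  fun hxy => by rcases hxy.diff_dist_adj (u := t) with h' | h' | h' <;> omega

end SimpleGraph

open SimpleGraph

section

variable {V : Type*} {G : SimpleGraph V}

lemma hasInducedP4_of_three_le_dist {t u : V} (h : 3 ≤ G.dist t u) : HasInducedP4 G := by
  obtain ⟨n, hn⟩ : ∃ n, G.dist t u = n + 1 + 1 + 1 := ⟨G.dist t u - 3, by omega⟩
  obtain ⟨b, hab, hb⟩ := exists_adj_dist_eq_of_dist_eq_succ hn
  obtain ⟨c, hbc, hc⟩ := exists_adj_dist_eq_of_dist_eq_succ hb
  obtain ⟨d, hcd, hd⟩ := exists_adj_dist_eq_of_dist_eq_succ hc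
  refine ⟨u, b, c, d, ?_, ?_, ?_, hab, hbc, hcd, ?_, ?_, ?_⟩ <;>
    first
    | rintro rfl; omega
    | exact not_adj_of_dist_add_two_le (t := t) (by omega)

lemma dist_le_two_of_not_hasInducedP4 (hP4 : ¬HasInducedP4 G) (u v : V) : G.dist u v ≤ 2 := by
  by_contra! h
  exact hP4 (hasInducedP4_of_three_le_dist h)

lemma mutuallyMaxDist_of_dist_eq_of_forall_dist_le {k : ℕ} (hk : ∀ u v, G.dist u v ≤ k)
    {x y : V} (h : G.dist x y = k) : MutuallyMaxDist G x y :=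
  ⟨fun x' _ => h ▸ hk x' y, fun y' _ => by rw [dist_comm (u := y), h]; exact hk y' x⟩

lemma strongResolvingGraph_adj_of_not_adj (hG : G.Connected) (hP4 : ¬HasInducedP4 G) {x y : V}
    (hne : x ≠ y) (hA : ¬G.Adj x y) : (strongResolvingGraph G).Adj x y := by
  have hdiam := dist_le_two_of_not_hasInducedP4 hP4
  have hxy : G.dist x y = 2 := le_antisymm (hdiam x y) (hG.one_lt_dist_of_ne_of_not_adj hne hA)
  exact ⟨hne, mutuallyMaxDist_of_dist_eq_of_forall_dist_le hdiam hxy⟩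

lemma maxDistTo_iff_of_adj {x y : V} (h : G.Adj x y) :
    MaxDistTo G x y ↔ G.neighborSet x \ {y} ⊆ G.neighborSet y \ {x} := by
  constructor
  · rintro hmax z ⟨hxz, hzy⟩
    have hle : G.dist z y ≤ 1 := (dist_eq_one_iff_adj.mpr h) ▸ hmax z hxz
    have hpos : 0 < G.dist z y := (hxz.symm.reachable.trans h.reachable).pos_dist_of_ne hzy
    exact ⟨(dist_eq_one_iff_adj.mp (by omega)).symm, hxz.ne'⟩
  · intro hsub z hxz
    rw [dist_eq_one_iff_adj.mpr h]
    by_cases hzy : z = y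
    · simp [hzy]
    · exact (dist_eq_one_iff_adj.mpr (hsub ⟨hxz, hzy⟩).1.symm).le

lemma strongResolvingGraph_adj_iff_twins_of_adj {x y : V} (h : G.Adj x y) :
    (strongResolvingGraph G).Adj x y ↔ Twins G x y := by
  simp only [strongResolvingGraph, MutuallyMaxDist, maxDistTo_iff_of_adj h,
    maxDistTo_iff_of_adj h.symm, Twins, Set.Subset.antisymm_iff, h.ne, ne_eq, not_false_eq_true,
    true_and]

lemma Twins.symm {x y : V} (h : Twins G x y) : Twins G y x :=
  Eq.symm h

lemma Twins.adj_of_adj {x y z : V} (ht : Twins G x y) (hyz : G.Adj y z) (hzx : z ≠ x) :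
    G.Adj x z :=
  (show z ∈ G.neighborSet x \ {y} from ht ▸ ⟨hyz, hzx⟩).1

lemma TrueTwins.symm {x y : V} (h : TrueTwins G x y) : TrueTwins G y x :=
  ⟨h.1.symm, h.2.symm⟩

lemma TrueTwins.adj_of_adj_of_trueTwins {x y z w : V} (hxy : TrueTwins G x y)
    (hyz : TrueTwins G y z) (hxw : G.Adj x w) (hwz : w ≠ z) : G.Adj z w := by
  by_cases hwy : w = y
  · exact hwy ▸ hyz.2.symm
  · exact hyz.1.symm.adj_of_adj (hxy.1.symm.adj_of_adj hxw hwy) hwz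

lemma TrueTwins.trans {x y z : V} (hxy : TrueTwins G x y) (hyz : TrueTwins G y z) (hxz : x ≠ z) :
    TrueTwins G x z :=
  ⟨Set.ext fun _ =>
    ⟨fun ⟨hxw, hwz⟩ => ⟨hxy.adj_of_adj_of_trueTwins hyz hxw hwz, hxw.ne'⟩,
     fun ⟨hzw, hwx⟩ => ⟨hyz.symm.adj_of_adj_of_trueTwins hxy.symm hzw hwx, hzw.ne'⟩⟩,
   hxy.1.adj_of_adj hyz.2 hxz.symm⟩

end

theorem strongResolvingGraph_cograph_general {V : Type*}
    (G : SimpleGraph V) (hG : G.Connected) (hP4 : ¬ HasInducedP4 G) :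
    ¬ HasInducedP4 (strongResolvingGraph G) := by
  rintro ⟨a, b, c, d, hac, had, hbd, hab, hbc, hcd, nac, nad, nbd⟩
  have adj_of_not_adj {x y : V} (hne : x ≠ y) (hn : ¬(strongResolvingGraph G).Adj x y) :
      G.Adj x y := by_contra fun h => hn (strongResolvingGraph_adj_of_not_adj hG hP4 hne h)
  have trueTwins {x y : V} (hS : (strongResolvingGraph G).Adj x y) (hA : G.Adj x y) :
      TrueTwins G x y := ⟨(strongResolvingGraph_adj_iff_twins_of_adj hA).1 hS, hA⟩
  have gac := adj_of_not_adj hac nac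
  have gad := adj_of_not_adj had nad
  have gbd := adj_of_not_adj hbd nbd
  by_cases gbc : G.Adj b c
  · have tbc := trueTwins hbc gbc
    have tac := (trueTwins hab (tbc.1.adj_of_adj gac.symm hab.1).symm).trans tbc hac
    exact nac ((strongResolvingGraph_adj_iff_twins_of_adj tac.2).2 tac.1)
  by_cases gab : G.Adj a b
  · exact gbc ((trueTwins hab gab).1.symm.adj_of_adj gac hbc.1.symm)
  by_cases gcd : G.Adj c d
  · exact gbc ((trueTwins hcd gcd).1.adj_of_adj gbd.symm hbc.1).symm
  exact hP4 ⟨b, d, a, c, hab.1.symm, hbc.1, hcd.1.symm, gbd, gad.symm, gac,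
    fun h => gab h.symm, gbc, fun h => gcd h.symm⟩

/-- the strong resolving graph of a finite connected cograph
is a cograph. -/
theorem strongResolvingGraph_cograph {V : Type*} [Fintype V]
    (G : SimpleGraph V) (hG : G.Connected) (hP4 : ¬ HasInducedP4 G) :
    ¬ HasInducedP4 (strongResolvingGraph G) :=
  strongResolvingGraph_cograph_general G hG hP4
end

section
/- Let G be a finite connected cograph on n vertices having no pair of true twins. Then smd(G) = n − ω(G), where ω(G) is the maximum size of a clique of G. -/
/-!
A connected cograph has diameter at most `2`, so two non-adjacent vertices are at distance `2`
and are strongly resolved only by themselves: the complement of a strong resolving set is a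
clique. Conversely, two vertices `u, v` of a clique `S` that are not true twins are told apart by
a vertex `w` adjacent to exactly one of them, say `u`; then `w ∉ S` and `w, u, v` is a geodesic,
so the complement of a clique is a strong resolving set.
-/

open Finset

namespace SimpleGraph

variable {V : Type*} {G : SimpleGraph V} {u v w : V}

lemma Walk.dist_getVert_of_length_eq_dist (p : G.Walk u v) (hp : p.length = G.dist u v)
    {i : ℕ} (hi : i ≤ p.length) : G.dist u (p.getVert i) = i := by
  have h₁ := dist_le (p.take i)
  have h₂ := dist_le (p.drop i)
  have h₃ := (p.take i).reachable.dist_triangle_left v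
  rw [Walk.take_length] at h₁
  rw [Walk.drop_length] at h₂
  omega

theorem Connected.dist_le_two_of_not_hasInducedP4 (hG : G.Connected) (hP4 : ¬HasInducedP4 G)
    (u v : V) : G.dist u v ≤ 2 := by
  by_contra! hlt
  obtain ⟨p, hp⟩ := hG.exists_walk_length_eq_dist u v
  have d₁ := p.dist_getVert_of_length_eq_dist hp (i := 1) (by omega)
  have d₂ := p.dist_getVert_of_length_eq_dist hp (i := 2) (by omega)
  have d₃ := p.dist_getVert_of_length_eq_dist hp (i := 3) (by omega)
  have a₀₁ : G.Adj u (p.getVert 1) := p.adj_snd (Walk.not_nil_of_ne (by rintro rfl; simp at hlt))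
  have a₁₂ : G.Adj (p.getVert 1) (p.getVert 2) := p.adj_getVert_succ (by omega)
  have a₂₃ : G.Adj (p.getVert 2) (p.getVert 3) := p.adj_getVert_succ (by omega)
  refine hP4 ⟨u, p.getVert 1, p.getVert 2, p.getVert 3, ?_, ?_, ?_, a₀₁, a₁₂, a₂₃, ?_, ?_, ?_⟩
  · intro h; rw [← h, dist_self] at d₂; omega
  · intro h; rw [← h, dist_self] at d₃; omega
  · intro h; rw [← h, d₁] at d₃; omega
  · intro h; rw [dist_eq_one_iff_adj.mpr h] at d₂; omega
  · intro h; rw [dist_eq_one_iff_adj.mpr h] at d₃; omega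
  · intro h
    have := a₀₁.reachable.dist_triangle_left (p.getVert 3)
    rw [d₁, d₃, dist_eq_one_iff_adj.mpr h] at this
    omega

lemma dist_eq_two_of_adj_of_adj (hwu : G.Adj w u) (huv : G.Adj u v) (hwv : w ≠ v)
    (hn : ¬G.Adj w v) : G.dist w v = 2 :=
  le_antisymm (dist_le (.cons hwu (.cons huv .nil)))
    ((hwu.reachable.trans huv.reachable).one_lt_dist_of_ne_of_not_adj hwv hn)

end SimpleGraph

open SimpleGraph

section StrongResolvingSet

variable {V : Type*} {G : SimpleGraph V} {u v w : V}

lemma twins_of_forall_adj_iff (h : ∀ w, w ≠ u → w ≠ v → (G.Adj u w ↔ G.Adj v w)) :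
    Twins G u v := by
  ext w
  simp only [Set.mem_sdiff, mem_neighborSet, Set.mem_singleton_iff]
  by_cases hwu : w = u
  · subst hwu; simp
  by_cases hwv : w = v
  · subst hwv; simp
  simp [hwu, hwv, h w hwu hwv]

lemma StronglyResolves.symm (h : StronglyResolves G w u v) : StronglyResolves G w v u :=
  Or.symm h

lemma stronglyResolves_self_left : StronglyResolves G u u v :=
  Or.inr (by rw [dist_self, zero_add])

lemma stronglyResolves_self_right : StronglyResolves G v u v :=
  Or.inl (by rw [dist_self, zero_add])

lemma stronglyResolves_of_adj_of_adj (hwu : G.Adj w u) (huv : G.Adj u v) (hwv : w ≠ v)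
    (hn : ¬G.Adj w v) : StronglyResolves G w u v := by
  right
  rw [dist_eq_two_of_adj_of_adj hwu huv hwv hn, dist_eq_one_iff_adj.mpr hwu,
    dist_eq_one_iff_adj.mpr huv]

lemma StronglyResolves.eq_or_eq (hG : G.Connected) (hdiam : ∀ x y, G.dist x y ≤ 2)
    (hne : u ≠ v) (hn : ¬G.Adj u v) (h : StronglyResolves G w u v) : w = u ∨ w = v := by
  have huv : G.dist u v = 2 := le_antisymm (hdiam u v) (hG.one_lt_dist_of_ne_of_not_adj hne hn)
  rw [StronglyResolves, dist_comm (u := v), huv] at h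
  rcases h with h | h
  · have := hdiam w u
    exact Or.inr (hG.dist_eq_zero_iff.mp (by omega))
  · have := hdiam w v
    exact Or.inl (hG.dist_eq_zero_iff.mp (by omega))

lemma isStrongResolvingSet_univ : IsStrongResolvingSet G Set.univ :=
  fun u _ _ ↦ ⟨u, trivial, stronglyResolves_self_left⟩

lemma isStrongResolvingSet_compl_of_isClique (htt : ∀ u v : V, u ≠ v → ¬TrueTwins G u v)
    {S : Set V} (hS : G.IsClique S) : IsStrongResolvingSet G Sᶜ := by
  intro u v huv
  by_cases hu : u ∈ S
  swap
  · exact ⟨u, hu, stronglyResolves_self_left⟩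
  by_cases hv : v ∈ S
  swap
  · exact ⟨v, hv, stronglyResolves_self_right⟩
  have hadj : G.Adj u v := hS hu hv huv
  obtain ⟨w, hwu, hwv, hw⟩ : ∃ w, w ≠ u ∧ w ≠ v ∧ ¬(G.Adj u w ↔ G.Adj v w) := by
    by_contra! h
    exact htt u v huv ⟨twins_of_forall_adj_iff h, hadj⟩
  have hwS : w ∉ S := fun hwS ↦ hw ⟨fun _ ↦ hS hv hwS hwv.symm, fun _ ↦ hS hu hwS hwu.symm⟩
  refine ⟨w, hwS, ?_⟩
  by_cases huw : G.Adj u w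
  · exact stronglyResolves_of_adj_of_adj huw.symm hadj hwv fun h ↦ hw (iff_of_true huw h.symm)
  · have hvw : G.Adj v w := by tauto
    exact (stronglyResolves_of_adj_of_adj hvw.symm hadj.symm hwu fun h ↦ huw h.symm).symm

lemma isClique_compl_of_isStrongResolvingSet (hG : G.Connected) (hdiam : ∀ x y, G.dist x y ≤ 2)
    {R : Set V} (hR : IsStrongResolvingSet G R) : G.IsClique Rᶜ := by
  intro u hu v hv huv
  by_contra hn
  obtain ⟨w, hwR, hw⟩ := hR u v huv
  rcases hw.eq_or_eq hG hdiam huv hn with rfl | rfl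
  exacts [hu hwR, hv hwR]

lemma IsStrongResolvingSet.smd_le_card [Fintype V] {R : Finset V} (hR : IsStrongResolvingSet G R) : smd G ≤ #R :=
  Nat.sInf_le ⟨R, hR, rfl⟩

lemma exists_isStrongResolvingSet_card_eq_smd [Fintype V] (G : SimpleGraph V) :
    ∃ R : Finset V, IsStrongResolvingSet G R ∧ #R = smd G :=
  Nat.sInf_mem (s := {n | ∃ R : Finset V, IsStrongResolvingSet G R ∧ #R = n})
    ⟨_, univ, by simpa using isStrongResolvingSet_univ, rfl⟩

end StrongResolvingSet

/-- for a finite connected cograph on `n` vertices without true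
twins, `smd(G) = n - ω(G)`. -/
theorem smd_eq_card_sub_cliqueNum {V : Type*} [Fintype V]
    (G : SimpleGraph V) (hG : G.Connected) (hP4 : ¬ HasInducedP4 G)
    (htt : ∀ u v : V, u ≠ v → ¬ TrueTwins G u v) :
    smd G = Fintype.card V - sSup {n | ∃ s : Finset V, G.IsNClique n s} := by
  classical
  change smd G = Fintype.card V - G.cliqueNum
  obtain ⟨S, hS⟩ := G.exists_isNClique_cliqueNum
  obtain ⟨R, hR, hRcard⟩ := exists_isStrongResolvingSet_card_eq_smd G
  have hS_compl : IsStrongResolvingSet G ↑Sᶜ := by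
    rw [coe_compl]
    exact isStrongResolvingSet_compl_of_isClique htt hS.isClique
  have hR_compl : G.IsClique ↑Rᶜ := by
    rw [coe_compl]
    exact isClique_compl_of_isStrongResolvingSet hG (hG.dist_le_two_of_not_hasInducedP4 hP4) hR
  have h₁ := hS_compl.smd_le_card
  have h₂ := IsClique.card_le_cliqueNum (tc := hR_compl)
  rw [card_compl, hS.card_eq] at h₁
  rw [card_compl] at h₂
  have := R.card_le_univ
  omega
end

section
/- Let G be a finite strongly connected digraph without loops and let u,v be distinct vertices with (u,v) ∈ E(G) and (v,u) ∉ E(G). If every in-neighbour of u is an in-neighbour of v (N^-(u) ⊆ N^-(v)) and every out-neighbour of v is an out-neighbour of u (N^+(v) ⊆ N^+(u)), then u is mutually maximally distant to v (u MMDT v), and hence {u,v} is an edge of the strong resolving graph G_SR. (This is the key claim in the directed-join case of Lemma 4: after a directed join G_l ≫ G_r, every u ∈ V(G_l) and v ∈ V(G_r) satisfy these hypotheses, so every such pair is adjacent in G_SR.) -/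
/-- There is a directed walk of length `n` from `u` to `v` in the digraph with
edge relation `E`. -/
def DWalk {V : Type*} (E : V → V → Prop) (u v : V) (n : ℕ) : Prop :=
  ∃ f : Fin (n + 1) → V, f 0 = u ∧ f (Fin.last n) = v ∧
    ∀ i : Fin n, E (f i.castSucc) (f i.succ)

/-- The length of a shortest directed path from `u` to `v`. -/
noncomputable def ddist {V : Type*} (E : V → V → Prop) (u v : V) : ℕ :=
  sInf {n | DWalk E u v n}

/-- The digraph with edge relation `E` is strongly connected. -/
def StronglyConnected {V : Type*} (E : V → V → Prop) : Prop :=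
  ∀ u v : V, ∃ n : ℕ, DWalk E u v n

/-- `u` is maximally distant to `v` (u MDT v): no in-neighbour of `u` is
farther from `v` than `u` is. -/
def MDT {V : Type*} (E : V → V → Prop) (u v : V) : Prop :=
  ∀ u', E u' u → ddist E u' v ≤ ddist E u v

/-- `v` is maximally distant from `u` (v MDF u): no out-neighbour of `v` is
farther from `u` than `v` is. -/
def MDF {V : Type*} (E : V → V → Prop) (v u : V) : Prop :=
  ∀ v', E v v' → ddist E u v' ≤ ddist E u v

/-- `u` is mutually maximally distant to `v` (u MMDT v). -/
def MMDT {V : Type*} (E : V → V → Prop) (u v : V) : Prop :=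
  MDT E u v ∧ MDF E v u

/-- The strong resolving graph of the digraph with edge relation `E`: an
undirected graph with an edge `{u,v}` iff `u ≠ v` and `u MMDT v` or `v MMDT u`. -/
def dsrGraph {V : Type*} (E : V → V → Prop) : SimpleGraph V where
  Adj u v := u ≠ v ∧ (MMDT E u v ∨ MMDT E v u)
  symm := by
    constructor
    rintro u v ⟨h1, h2⟩
    exact ⟨h1.symm, h2.symm⟩
  loopless := by
    constructor
    rintro u ⟨h, -⟩
    exact h rfl

/-- `w` strongly resolves `u` to `v`: there is a shortest directed path from
`w` to `v` containing `u` or a shortest directed path from `u` to `w`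
containing `v`. -/
def DStronglyResolves {V : Type*} (E : V → V → Prop) (w u v : V) : Prop :=
  ddist E w v = ddist E w u + ddist E u v ∨
  ddist E u w = ddist E u v + ddist E v w

/-- `R` is a strong resolving set for the digraph with edge relation `E`. -/
def IsDStrongResolvingSet {V : Type*} (E : V → V → Prop) (R : Set V) : Prop :=
  ∀ u v : V, u ≠ v → ∃ w ∈ R, DStronglyResolves E w u v

/-- The strong metric dimension of the digraph with edge relation `E`. -/
noncomputable def dsmd {V : Type*} [Fintype V] (E : V → V → Prop) : ℕ :=
  sInf {n | ∃ R : Finset V, IsDStrongResolvingSet E ↑R ∧ R.card = n}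

/-- The join of two digraphs on disjoint vertex sets: keep all edges and add
all edges in both directions between the two graphs. -/
def joinE {V1 V2 : Type*} (E1 : V1 → V1 → Prop) (E2 : V2 → V2 → Prop) :
    V1 ⊕ V2 → V1 ⊕ V2 → Prop
  | Sum.inl a, Sum.inl b => E1 a b
  | Sum.inr a, Sum.inr b => E2 a b
  | Sum.inl _, Sum.inr _ => True
  | Sum.inr _, Sum.inl _ => True

/-- A solitary vertex: some other vertex with no edge to or from it. -/
def SolitaryVertex {V : Type*} (E : V → V → Prop) (u : V) : Prop :=
  ∃ v : V, v ≠ u ∧ ¬ E u v ∧ ¬ E v u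

/-- An in-vertex: some vertex with an edge to `u` but no edge back. -/
def InVertex {V : Type*} (E : V → V → Prop) (u : V) : Prop :=
  ∃ v : V, E v u ∧ ¬ E u v

/-- An out-vertex: some vertex with an edge from `u` but no edge back. -/
def OutVertex {V : Type*} (E : V → V → Prop) (u : V) : Prop :=
  ∃ v : V, E u v ∧ ¬ E v u

/-- An in-out-vertex: both an in-vertex and an out-vertex. -/
def InOutVertex {V : Type*} (E : V → V → Prop) (u : V) : Prop :=
  InVertex E u ∧ OutVertex E u

section

variable {V : Type*} {E : V → V → Prop} {a b : V}

lemma DWalk.of_adj (h : E a b) : DWalk E a b 1 := by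
  refine ⟨![a, b], rfl, rfl, fun i => ?_⟩
  fin_cases i
  simpa using h

lemma DWalk.eq_of_zero (h : DWalk E a b 0) : a = b := by
  obtain ⟨f, hf0, hfl, -⟩ := h
  exact hf0.symm.trans hfl

lemma ddist_le_one_of_adj (h : E a b) : ddist E a b ≤ 1 :=
  Nat.sInf_le (DWalk.of_adj h)

lemma ddist_eq_one_of_adj (hne : a ≠ b) (h : E a b) : ddist E a b = 1 := by
  refine le_antisymm (ddist_le_one_of_adj h) (Nat.one_le_iff_ne_zero.mpr fun h0 => hne ?_)
  have hmem : DWalk E a b (ddist E a b) :=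
    Nat.sInf_mem (s := {n | DWalk E a b n}) ⟨1, DWalk.of_adj h⟩
  exact (h0 ▸ hmem).eq_of_zero

-- An edge `(u, v)` gives `d(u, v) = 1`, and the neighbourhood inclusions keep the competing
-- distances at most `1`.
lemma mdt_of_adj {u v : V} (huv : u ≠ v) (huvE : E u v) (hin : ∀ x, E x u → E x v) :
    MDT E u v := fun _ hx =>
  (ddist_le_one_of_adj (hin _ hx)).trans (ddist_eq_one_of_adj huv huvE).ge

lemma mdf_of_adj {u v : V} (huv : u ≠ v) (huvE : E u v) (hout : ∀ x, E v x → E u x) :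
    MDF E v u := fun _ hx =>
  (ddist_le_one_of_adj (hout _ hx)).trans (ddist_eq_one_of_adj huv huvE).ge

end

theorem oneWayEdge_MMDT_general {V : Type*} (E : V → V → Prop)
    (u v : V) (huv : u ≠ v) (huvE : E u v)
    (hin : ∀ x : V, E x u → E x v) (hout : ∀ x : V, E v x → E u x) :
    MMDT E u v ∧ (dsrGraph E).Adj u v := by
  have hmmdt : MMDT E u v := ⟨mdt_of_adj huv huvE hin, mdf_of_adj huv huvE hout⟩
  exact ⟨hmmdt, huv, Or.inl hmmdt⟩

/-- if `(u,v)` is a one-way edge of a finite strongly connected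
loopless digraph and `N⁻(u) ⊆ N⁻(v)` and `N⁺(v) ⊆ N⁺(u)`, then `u MMDT v`
and hence `{u,v}` is an edge of `G_SR`. -/
theorem oneWayEdge_MMDT {V : Type*} [Fintype V] (E : V → V → Prop)
    (hloop : ∀ x : V, ¬ E x x) (hsc : StronglyConnected E)
    (u v : V) (huv : u ≠ v) (huvE : E u v) (hvuE : ¬ E v u)
    (hin : ∀ x : V, E x u → E x v) (hout : ∀ x : V, E v x → E u x) :
    MMDT E u v ∧ (dsrGraph E).Adj u v :=
  oneWayEdge_MMDT_general E u v huv huvE hin hout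
end

section
/- Let G be a finite strongly connected digraph without loops and let u,v be distinct vertices with (u,v) ∈ E(G) and (v,u) ∈ E(G). Then {u,v} is NOT an edge of the strong resolving graph G_SR if and only if both of the following hold: (1) there exists y ≠ v with (y,u) ∈ E(G) and (y,v) ∉ E(G), or there exists x ≠ u with (v,x) ∈ E(G) and (u,x) ∉ E(G); and (2) there exists x ≠ u with (x,v) ∈ E(G) and (x,u) ∉ E(G), or there exists y ≠ v with (u,y) ∈ E(G) and (v,y) ∉ E(G). -/
/-!
Both arcs between `u` and `v` put them at distance `1` from each other, and in a strongly
connected digraph a vertex `w` is at distance greater than `1` from `z` exactly when `w ≠ z`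
and `(w, z)` is not an arc. Hence `u MDT v` fails exactly when some in-neighbour `y` of `u`
has `y ≠ v` and `(y, v) ∉ E`, and `v MDF u` fails exactly when some out-neighbour `x` of `v`
has `x ≠ u` and `(u, x) ∉ E`; conditions (1) and (2) say that neither `u MMDT v` nor
`v MMDT u` holds.
-/

section

variable {V : Type*} {E : V → V → Prop} {a b : V}

theorem dWalk_zero_iff : DWalk E a b 0 ↔ a = b := by
  constructor
  · rintro ⟨f, rfl, rfl, -⟩
    rfl
  · rintro rfl
    exact ⟨fun _ => a, rfl, rfl, fun i => i.elim0⟩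

theorem dWalk_one_iff : DWalk E a b 1 ↔ E a b := by
  constructor
  · rintro ⟨f, rfl, rfl, hE⟩
    exact hE 0
  · intro h
    exact ⟨![a, b], rfl, rfl, fun i => by fin_cases i; simpa⟩

theorem dWalk_ddist (hab : ∃ n, DWalk E a b n) : DWalk E a b (ddist E a b) :=
  Nat.sInf_mem hab

theorem ddist_eq_one_of_ne_of_adj (hne : a ≠ b) (hE : E a b) : ddist E a b = 1 := by
  have hle : ddist E a b ≤ 1 := Nat.sInf_le (dWalk_one_iff.mpr hE)
  have hpos : ddist E a b ≠ 0 := fun h => by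
    have hmem := dWalk_ddist ⟨1, dWalk_one_iff.mpr hE⟩
    rw [h, dWalk_zero_iff] at hmem
    exact hne hmem
  omega

theorem one_lt_ddist_iff (hab : ∃ n, DWalk E a b n) : 1 < ddist E a b ↔ a ≠ b ∧ ¬ E a b := by
  have hmem := dWalk_ddist hab
  constructor
  · intro h
    refine ⟨fun heq => ?_, fun hE => ?_⟩
    · have : ddist E a b ≤ 0 := Nat.sInf_le (dWalk_zero_iff.mpr heq)
      omega
    · have : ddist E a b ≤ 1 := Nat.sInf_le (dWalk_one_iff.mpr hE)
      omega
  · rintro ⟨hne, hnE⟩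
    by_contra! h
    interval_cases ddist E a b
    · exact hne (dWalk_zero_iff.mp hmem)
    · exact hnE (dWalk_one_iff.mp hmem)

theorem not_mdt_iff_of_ddist_eq_one (hsc : StronglyConnected E) (hd : ddist E a b = 1) :
    ¬ MDT E a b ↔ ∃ y, y ≠ b ∧ E y a ∧ ¬ E y b := by
  simp only [MDT, hd, not_forall, not_le, one_lt_ddist_iff (hsc _ b), exists_prop]
  exact exists_congr fun y => ⟨fun ⟨hya, hne, hnE⟩ => ⟨hne, hya, hnE⟩,
    fun ⟨hne, hya, hnE⟩ => ⟨hya, hne, hnE⟩⟩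

theorem not_mdf_iff_of_ddist_eq_one (hsc : StronglyConnected E) (hd : ddist E a b = 1) :
    ¬ MDF E b a ↔ ∃ x, x ≠ a ∧ E b x ∧ ¬ E a x := by
  simp only [MDF, hd, not_forall, not_le, one_lt_ddist_iff (hsc a _), exists_prop]
  exact exists_congr fun x => ⟨fun ⟨hbx, hne, hnE⟩ => ⟨Ne.symm hne, hbx, hnE⟩,
    fun ⟨hne, hbx, hnE⟩ => ⟨hbx, Ne.symm hne, hnE⟩⟩

theorem not_mmdt_iff_of_ddist_eq_one (hsc : StronglyConnected E) (hd : ddist E a b = 1) :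
    ¬ MMDT E a b ↔
      (∃ y, y ≠ b ∧ E y a ∧ ¬ E y b) ∨ (∃ x, x ≠ a ∧ E b x ∧ ¬ E a x) := by
  rw [MMDT, not_and_or, not_mdt_iff_of_ddist_eq_one hsc hd, not_mdf_iff_of_ddist_eq_one hsc hd]

end

theorem twoWayEdge_not_adj_dsrGraph_iff_general {V : Type*}
    (E : V → V → Prop) (hsc : StronglyConnected E)
    (u v : V) (huv : u ≠ v) (huvE : E u v) (hvuE : E v u) :
    ¬ (dsrGraph E).Adj u v ↔
      ((∃ y : V, y ≠ v ∧ E y u ∧ ¬ E y v) ∨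
        (∃ x : V, x ≠ u ∧ E v x ∧ ¬ E u x)) ∧
      ((∃ x : V, x ≠ u ∧ E x v ∧ ¬ E x u) ∨
        (∃ y : V, y ≠ v ∧ E u y ∧ ¬ E v y)) := by
  have hadj : (dsrGraph E).Adj u v ↔ MMDT E u v ∨ MMDT E v u :=
    and_iff_right_of_imp fun _ => huv
  rw [hadj, not_or,
    not_mmdt_iff_of_ddist_eq_one hsc (ddist_eq_one_of_ne_of_adj huv huvE),
    not_mmdt_iff_of_ddist_eq_one hsc (ddist_eq_one_of_ne_of_adj huv.symm hvuE)]

/-- for a two-way edge `(u,v)` of a finite strongly connected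
loopless digraph, `{u,v}` is NOT an edge of `G_SR` iff conditions (1) and (2)
hold. -/
theorem twoWayEdge_not_adj_dsrGraph_iff {V : Type*} [Fintype V]
    (E : V → V → Prop) (hloop : ∀ x : V, ¬ E x x) (hsc : StronglyConnected E)
    (u v : V) (huv : u ≠ v) (huvE : E u v) (hvuE : E v u) :
    ¬ (dsrGraph E).Adj u v ↔
      ((∃ y : V, y ≠ v ∧ E y u ∧ ¬ E y v) ∨
        (∃ x : V, x ≠ u ∧ E v x ∧ ¬ E u x)) ∧
      ((∃ x : V, x ≠ u ∧ E x v ∧ ¬ E x u) ∨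
        (∃ y : V, y ≠ v ∧ E u y ∧ ¬ E v y)) :=
  twoWayEdge_not_adj_dsrGraph_iff_general E hsc u v huv huvE hvuE
end
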